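/- arXiv:1705.04564 — 5 statements merged into one kernel-verified Lean document; each statement's English description precedes it below -/
import Mathlib

section
/- An open set V in the Scott topology on P(ω) is a nonzero join-irreducible element of the lattice of open sets (i.e., V is nonempty and whenever V ⊆ U ∪ U' for open U, U', either V ⊆ U or V ⊆ U') if and only if V = ↑F := {A ⊆ ω : F ⊆ A} for some finite set F ⊆ ω. -/
/-- The basic Scott-open set `↑F = {A : F ⊆ A ⊆ ω}` for a finite `F ⊆ ω`. -/
def upF (F : Finset ℕ) : Set (Set ℕ) := {A | (F : Set ℕ) ⊆ A}

/-- The Scott topology on `P(ω)`, generated by the sets `↑F` for finite `F`. -/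
instance scottP : TopologicalSpace (Set ℕ) :=
  TopologicalSpace.generateFrom {V | ∃ F : Finset ℕ, V = upF F}

lemma upF_open (F : Finset ℕ) : IsOpen (upF F) :=
  TopologicalSpace.GenerateOpen.basic _ ⟨F, rfl⟩

lemma mem_upF_self (F : Finset ℕ) : (F : Set ℕ) ∈ upF F := fun _ hx => hx

lemma basis_lemma {V : Set (Set ℕ)} (hV : IsOpen V) :
    ∀ A ∈ V, ∃ F : Finset ℕ, (F : Set ℕ) ⊆ A ∧ upF F ⊆ V := by
  induction hV with
  | basic W hW =>
      obtain ⟨F, rfl⟩ := hW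
      intro A hA
      exact ⟨F, hA, subset_rfl⟩
  | univ =>
      intro A _
      exact ⟨∅, by simp, fun _ _ => trivial⟩
  | inter U U' _ _ ih ih' =>
      intro A hA
      obtain ⟨F, hFA, hFU⟩ := ih A hA.1
      obtain ⟨G, hGA, hGU⟩ := ih' A hA.2
      refine ⟨F ∪ G, ?_, ?_⟩
      · intro x hx
        rcases Finset.mem_union.mp (by exact_mod_cast hx) with h | h
        · exact hFA h
        · exact hGA h
      · intro B hB
        have hF : (F : Set ℕ) ⊆ B := fun x hx => hB (by
          exact_mod_cast Finset.mem_union_left _ (by exact_mod_cast hx))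
        have hG : (G : Set ℕ) ⊆ B := fun x hx => hB (by
          exact_mod_cast Finset.mem_union_right _ (by exact_mod_cast hx))
        exact ⟨hFU hF, hGU hG⟩
  | sUnion S _ ih =>
      intro A hA
      obtain ⟨W, hW, hAW⟩ := hA
      obtain ⟨F, hFA, hFW⟩ := ih W hW A hAW
      exact ⟨F, hFA, hFW.trans (Set.subset_sUnion_of_mem hW)⟩

lemma main_aux (V : Set (Set ℕ)) (hV : IsOpen V)
    (hirr : ∀ U U' : Set (Set ℕ), IsOpen U → IsOpen U' →
        V ⊆ U ∪ U' → V ⊆ U ∨ V ⊆ U') :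
    ∀ k (F : Finset ℕ), F.card ≤ k → upF F ⊆ V → ∃ F', V = upF F' := by
  intro k
  induction k with
  | zero =>
      intro F hcard hFV
      by_cases h : V ⊆ upF F
      · exact ⟨F, le_antisymm h hFV⟩
      · -- we derive a contradiction-free smaller set, impossible at 0
        exfalso
        rw [Set.not_subset] at h
        obtain ⟨B, hBV, hBF⟩ := h
        obtain ⟨n, hnF, _⟩ : ∃ n, n ∈ F ∧ n ∉ B := by
          by_contra hc
          push_neg at hc
          exact hBF fun x hx => hc x (by exact_mod_cast hx)
        have : F.card = 0 := Nat.le_zero.mp hcard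
        simp [Finset.card_eq_zero] at this
        subst this
        simp at hnF
  | succ k ih =>
      intro F hcard hFV
      by_cases h : V ⊆ upF F
      · exact ⟨F, le_antisymm h hFV⟩
      rw [Set.not_subset] at h
      obtain ⟨B, hBV, hBF⟩ := h
      obtain ⟨n, hnF, hnB⟩ : ∃ n, n ∈ F ∧ n ∉ B := by
        by_contra hc
        push_neg at hc
        exact hBF fun x hx => hc x (by exact_mod_cast hx)
      -- U' : union of basics inside V avoiding n
      set U' : Set (Set ℕ) := ⋃₀ {W | ∃ H : Finset ℕ, n ∉ H ∧ upF H ⊆ V ∧ W = upF H}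
        with hU'def
      have hU'open : IsOpen U' := by
        apply isOpen_sUnion
        rintro W ⟨H, _, _, rfl⟩
        exact upF_open H
      have hcover : V ⊆ upF {n} ∪ U' := by
        intro A hA
        obtain ⟨H, hHA, hHV⟩ := basis_lemma hV A hA
        by_cases hn : n ∈ H
        · left
          intro x hx
          have : x = n := by simpa using hx
          subst this
          exact hHA (by exact_mod_cast hn)
        · right
          exact ⟨upF H, ⟨H, hn, hHV, rfl⟩, hHA⟩
      rcases hirr _ _ (upF_open {n}) hU'open hcover with h1 | h2
      · exfalso
        have := h1 hBV
        exact hnB (this (by simp))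
      · -- (F : Set ℕ) ∈ V ⊆ U', get smaller H
        have hFmem : (F : Set ℕ) ∈ U' := h2 (hFV (mem_upF_self F))
        obtain ⟨W, ⟨H, hnH, hHV, rfl⟩, hFH⟩ := hFmem
        have hHF : H ⊆ F := by
          intro x hx
          exact_mod_cast hFH (by exact_mod_cast hx)
        have hlt : H.card < F.card :=
          Finset.card_lt_card (Finset.ssubset_iff_of_subset hHF |>.mpr ⟨n, hnF, hnH⟩)
        exact ih H (by omega) hHV

theorem stmt0 (V : Set (Set ℕ)) (hV : IsOpen V) :
    (V.Nonempty ∧ ∀ U U' : Set (Set ℕ), IsOpen U → IsOpen U' →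
        V ⊆ U ∪ U' → V ⊆ U ∨ V ⊆ U') ↔
      ∃ F : Finset ℕ, V = upF F := by
  constructor
  · rintro ⟨⟨A, hA⟩, hirr⟩
    obtain ⟨F, _, hFV⟩ := basis_lemma hV A hA
    exact main_aux V hV hirr F.card F le_rfl hFV
  · rintro ⟨F, rfl⟩
    refine ⟨⟨(F : Set ℕ), mem_upF_self F⟩, ?_⟩
    intro U U' hU hU' hsub
    rcases hsub (mem_upF_self F) with h | h
    · left
      obtain ⟨G, hGF, hGU⟩ := basis_lemma hU _ h
      exact fun A hA => hGU (hGF.trans hA)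
    · right
      obtain ⟨G, hGF, hGU⟩ := basis_lemma hU' _ h
      exact fun A hA => hGU (hGF.trans hA)
end

section
/- Let A, B be finite disjoint subsets of ℝⁿ with n ≥ 2, and let U ⊆ ℝⁿ be a connected open set containing A ∪ B. Then there exist open connected sets V, W ⊆ U with A ⊆ V, B ⊆ W, and V ∩ W = ∅. -/
/-!
In dimension at least two, removing a countable set from a connected open set `U` leaves it
connected. Pushing points around inside small balls therefore shows that the homeomorphisms of
the space mapping `U` onto itself and fixing a finite set `F` pointwise act transitively on
`U \ F`. Moving the points one at a time, a single such homeomorphism `g` sends `A` into a ball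
and `B` into a disjoint ball inside `U`; the preimages of these balls under `g` are `V` and `W`.
-/

open Metric Set Filter Topology

section Topology
variable {X : Type*} [TopologicalSpace X]

def preservingFixingSubgroup (U F : Set X) : Subgroup (X ≃ₜ X) where
  carrier := {h | h '' U = U ∧ EqOn h id F}
  mul_mem' {g h} hg hh := ⟨show (g ∘ h) '' U = U by rw [image_comp, hh.1, hg.1],
    fun x hx ↦ show g (h x) = x by rw [hh.2 hx]; exact hg.2 hx⟩
  one_mem' := ⟨image_id U, fun _ _ ↦ rfl⟩
  inv_mem' {h} hh := ⟨by
      change h.symm '' U = U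
      conv_lhs => rw [← hh.1]
      exact h.symm_image_image U,
    fun x hx ↦ h.symm_apply_eq.2 (hh.2 hx).symm⟩

lemma preservingFixingSubgroup_anti {U F F' : Set X} (hFF' : F ⊆ F') :
    preservingFixingSubgroup U F' ≤ preservingFixingSubgroup U F :=
  fun _ hh ↦ ⟨hh.1, hh.2.mono hFF'⟩

end Topology

lemma Equiv.image_eq_of_eqOn_compl {α : Type*} (e : α ≃ α) {s U : Set α} (hsU : s ⊆ U)
    (he : EqOn e id sᶜ) : e '' U = U := by
  have hmaps : ∀ f : α ≃ α, EqOn f id sᶜ → MapsTo f U U := fun f hf x hx ↦ by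
    by_contra hfx
    have : f (f x) = f x := hf fun h ↦ hfx (hsU h)
    exact hfx (by rwa [f.injective this])
  refine (hmaps e he).image_subset.antisymm fun x hx ↦ ⟨e.symm x, hmaps e.symm ?_ hx, by simp⟩
  intro y hy
  simpa using (congrArg e.symm (he hy)).symm

variable {E : Type*} [NormedAddCommGroup E] [NormedSpace ℝ E]

lemma exists_homeomorph_apply_center_eq_add [CompleteSpace E] (z v : E) {r : ℝ}
    (hv : ‖v‖ < r) : ∃ h : E ≃ₜ E, h z = z + v ∧ EqOn h id (ball z r)ᶜ := by
  have hr : 0 < r := (norm_nonneg v).trans_lt hv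
  set φ : E → ℝ := fun w ↦ max (1 - ‖w - z‖ / r) 0
  have hφ : ∀ w w', |φ w - φ w'| ≤ ‖w - w'‖ / r := fun w w' ↦ calc
    |φ w - φ w'| ≤ |(1 - ‖w - z‖ / r) - (1 - ‖w' - z‖ / r)| := abs_max_sub_max_le_abs _ _ _
    _ = |‖w - z‖ - ‖w' - z‖| / r := by
      rw [sub_sub_sub_cancel_left, ← sub_div, abs_div, abs_of_pos hr, abs_sub_comm]
    _ ≤ ‖w - w'‖ / r := by
      gcongr; simpa using abs_norm_sub_norm_le (w - z) (w' - z)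
  -- `w ↦ w + φ w • v` differs from the identity by a map with Lipschitz constant `‖v‖ / r < 1`
  set c : NNReal := ⟨‖v‖ / r, by positivity⟩
  have hc : c < 1 := by rw [← NNReal.coe_lt_one]; exact (div_lt_one hr).2 hv
  have happrox : ApproximatesLinearOn (fun w ↦ w + φ w • v)
      (ContinuousLinearEquiv.refl ℝ E : E →L[ℝ] E) univ c := by
    intro w _ w' _
    calc ‖w + φ w • v - (w' + φ w' • v) - (w - w')‖ = |φ w - φ w'| * ‖v‖ := by
          rw [← Real.norm_eq_abs, ← norm_smul, sub_smul]; congr 1; abel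
      _ ≤ ‖w - w'‖ / r * ‖v‖ := by gcongr; exact hφ w w'
      _ = c * ‖w - w'‖ := by
        change _ = ‖v‖ / r * _; ring
  have hN : Subsingleton E ∨ c < ‖((ContinuousLinearEquiv.refl ℝ E).symm : E →L[ℝ] E)‖₊⁻¹ := by
    rcases subsingleton_or_nontrivial E with hE | _
    · exact Or.inl hE
    · right; simpa using hc
  refine ⟨happrox.toHomeomorph _ hN, ?_, fun w hw ↦ ?_⟩
  · change z + φ z • v = z + v
    simp [φ]
  · change w + φ w • v = w
    have : φ w = 0 := max_eq_right (by
      rw [mem_compl_iff, mem_ball, not_lt, dist_eq_norm] at hw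
      linarith [(one_le_div hr).2 hw])
    simp [this]

lemma isPreconnected_ball_diff_countable (h1 : 1 < Module.rank ℝ E) (c : E) (r : ℝ)
    {F : Set E} (hF : F.Countable) : IsPreconnected (ball c r \ F) := by
  rcases le_or_gt r 0 with hr | hr
  · simp [ball_eq_empty.2 hr, isPreconnected_empty]
  set e := OpenPartialHomeomorph.univBall (E := E) c r
  have hinj : Function.Injective e := injOn_univ.1 (by simpa [e] using e.injOn)
  have : ball c r \ F = e '' (e ⁻¹' F)ᶜ := by
    rw [image_compl_preimage, ← image_univ, ← OpenPartialHomeomorph.univBall_source c r,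
      e.image_source_eq_target, OpenPartialHomeomorph.univBall_target c hr]
  rw [this]
  exact ((hF.preimage hinj).isConnected_compl_of_one_lt_rank h1).isPreconnected.image _
    (OpenPartialHomeomorph.continuous_univBall c r).continuousOn

lemma IsOpen.isPreconnected_diff_countable (h1 : 1 < Module.rank ℝ E) {U F : Set E}
    (hUo : IsOpen U) (hU : IsPreconnected U) (hF : F.Countable) : IsPreconnected (U \ F) := by
  have : Nontrivial E := rank_pos_iff_nontrivial.1 (zero_lt_one.trans h1)
  -- `c ∪ F ∈ 𝓝 x` says that `c` contains every point of `Fᶜ` near `x`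
  let P : E → E → Prop := fun x y ↦
    ∃ c ⊆ U \ F, IsPreconnected c ∧ c ∪ F ∈ 𝓝 x ∧ c ∪ F ∈ 𝓝 y
  have hP : ∀ x ∈ U, ∀ y ∈ U, P x y := by
    intro x hx y hy
    refine hU.induction₂ P (fun x hx ↦ ?_) ?_ ?_ hx hy
    · obtain ⟨ε, hε, hball⟩ := Metric.isOpen_iff.1 hUo x hx
      filter_upwards [nhdsWithin_le_nhds (ball_mem_nhds x hε)] with y hy
      have hsub : ball x ε ⊆ (ball x ε \ F) ∪ F := by simp
      exact ⟨ball x ε \ F, sdiff_subset_sdiff_left hball,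
        isPreconnected_ball_diff_countable h1 x ε hF,
        mem_of_superset (ball_mem_nhds x hε) hsub, mem_of_superset (isOpen_ball.mem_nhds hy) hsub⟩
    · rintro x y z - - - ⟨c, hcU, hc, hcx, hcy⟩ ⟨c', hc'U, hc', hc'y, hc'z⟩
      obtain ⟨w, hwF, hwc, hwc'⟩ := (hF.dense_compl ℝ).inter_nhds_nonempty (inter_mem hcy hc'y)
      refine ⟨c ∪ c', union_subset hcU hc'U,
        hc.union w (hwc.resolve_right hwF) (hwc'.resolve_right hwF) hc', ?_, ?_⟩
      · exact mem_of_superset hcx (union_subset_union_left F subset_union_left)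
      · exact mem_of_superset hc'z (union_subset_union_left F subset_union_right)
    · rintro x y - - ⟨c, hcU, hc, hcx, hcy⟩
      exact ⟨c, hcU, hc, hcy, hcx⟩
  refine isPreconnected_of_forall_pair fun x hx y hy ↦ ?_
  obtain ⟨c, hcU, hc, hcx, hcy⟩ := hP x hx.1 y hy.1
  exact ⟨c, hcU, (mem_of_mem_nhds hcx).resolve_right hx.2,
    (mem_of_mem_nhds hcy).resolve_right hy.2, hc⟩

lemma IsOpen.exists_disjoint_balls_subset [Nontrivial E] {U : Set E} (hUo : IsOpen U)
    (hne : U.Nonempty) : ∃ x r y s, 0 < r ∧ 0 < s ∧ ball x r ⊆ U ∧ ball y s ⊆ U ∧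
      Disjoint (ball x r) (ball y s) := by
  obtain ⟨x, hx⟩ := hne
  obtain ⟨y, hy, hyx⟩ := ((countable_singleton x).dense_compl ℝ).inter_open_nonempty U hUo ⟨x, hx⟩
  obtain ⟨r, hr, hxU⟩ := Metric.isOpen_iff.1 hUo x hx
  obtain ⟨s, hs, hyU⟩ := Metric.isOpen_iff.1 hUo y hy
  have hd : 0 < dist x y := dist_pos.2 (Ne.symm hyx)
  refine ⟨x, min r (dist x y / 2), y, min s (dist x y / 2), by positivity, by positivity,
    (ball_subset_ball (min_le_left _ _)).trans hxU, (ball_subset_ball (min_le_left _ _)).trans hyU,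
    ball_disjoint_ball ?_⟩
  linarith [min_le_right r (dist x y / 2), min_le_right s (dist x y / 2)]

variable [CompleteSpace E]

lemma exists_mem_preservingFixingSubgroup_apply_eq (h1 : 1 < Module.rank ℝ E) {U F : Set E}
    (hUo : IsOpen U) (hU : IsPreconnected U) (hF : F.Finite) {x y : E} (hx : x ∈ U \ F)
    (hy : y ∈ U \ F) : ∃ g ∈ preservingFixingSubgroup U F, g x = y := by
  refine (hUo.isPreconnected_diff_countable h1 hU hF.countable).induction₂
    (fun x y ↦ ∃ g ∈ preservingFixingSubgroup U F, g x = y) (fun x hx ↦ ?_) ?_ ?_ hx hy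
  · obtain ⟨r, hr, hball⟩ := Metric.isOpen_iff.1 (hUo.sdiff hF.isClosed) x hx
    filter_upwards [nhdsWithin_le_nhds (ball_mem_nhds x hr)] with y hy
    obtain ⟨h, hxy, hfix⟩ :=
      exists_homeomorph_apply_center_eq_add x (y - x) (by rwa [← dist_eq_norm])
    refine ⟨h, ⟨h.toEquiv.image_eq_of_eqOn_compl (hball.trans sdiff_subset) hfix,
      hfix.mono fun f hf hfb ↦ (hball hfb).2 hf⟩, by rw [hxy, add_sub_cancel]⟩
  · rintro x y z - - - ⟨g, hg, rfl⟩ ⟨g', hg', rfl⟩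
    exact ⟨g' * g, mul_mem hg' hg, rfl⟩
  · rintro x y - - ⟨g, hg, rfl⟩
    exact ⟨g⁻¹, inv_mem hg, by simp⟩

lemma exists_mem_preservingFixingSubgroup_mapsTo (h1 : 1 < Module.rank ℝ E) {U F S O : Set E}
    (hUo : IsOpen U) (hU : IsPreconnected U) (hF : F.Finite) (hS : S.Finite) (hSU : S ⊆ U \ F)
    (hO : IsOpen O) (hOne : O.Nonempty) (hOU : O ⊆ U) :
    ∃ g ∈ preservingFixingSubgroup U F, MapsTo g S O := by
  have : Nontrivial E := rank_pos_iff_nontrivial.1 (zero_lt_one.trans h1)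
  induction S, hS using Set.Finite.induction_on with
  | empty => exact ⟨1, one_mem _, mapsTo_empty _ _⟩
  | @insert a S haS hS ih =>
    obtain ⟨g, hg, hgS⟩ := ih ((subset_insert a S).trans hSU)
    obtain ⟨haU, haF⟩ := hSU (mem_insert a S)
    have hF' : (F ∪ g '' S).Finite := hF.union (hS.image g)
    have hga : g a ∈ U \ (F ∪ g '' S) := by
      refine ⟨hg.1 ▸ mem_image_of_mem g haU, fun hgaF ↦ ?_⟩
      rcases hgaF with hgaF | hgaS
      · exact haF (g.injective (hg.2 hgaF) ▸ hgaF)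
      · exact haS (g.injective.mem_set_image.1 hgaS)
    obtain ⟨y, hyO, hyF⟩ := (hF'.countable.dense_compl ℝ).inter_open_nonempty O hO hOne
    obtain ⟨g', hg', hg'a⟩ :=
      exists_mem_preservingFixingSubgroup_apply_eq h1 hUo hU hF' hga ⟨hOU hyO, hyF⟩
    refine ⟨g' * g, mul_mem (preservingFixingSubgroup_anti subset_union_left hg') hg, ?_⟩
    rintro b (rfl | hb)
    · rwa [Homeomorph.mul_apply, hg'a]
    · rw [Homeomorph.mul_apply, hg'.2 (subset_union_right (mem_image_of_mem g hb))]
      exact hgS hb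

theorem stmt3 (n : ℕ) (hn : 2 ≤ n) (A B U : Set (EuclideanSpace ℝ (Fin n)))
    (hA : A.Finite) (hB : B.Finite) (hAB : Disjoint A B)
    (hUo : IsOpen U) (hUc : IsConnected U) (hsub : A ∪ B ⊆ U) :
    ∃ V W : Set (EuclideanSpace ℝ (Fin n)), IsOpen V ∧ IsOpen W ∧
      IsConnected V ∧ IsConnected W ∧ V ⊆ U ∧ W ⊆ U ∧ A ⊆ V ∧ B ⊆ W ∧ V ∩ W = ∅ := by
  have h1 : 1 < Module.rank ℝ (EuclideanSpace ℝ (Fin n)) :=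
    Module.one_lt_rank_of_one_lt_finrank (by rw [finrank_euclideanSpace_fin]; omega)
  have : Nontrivial (EuclideanSpace ℝ (Fin n)) := rank_pos_iff_nontrivial.1 (zero_lt_one.trans h1)
  obtain ⟨x, r, y, s, hr, hs, hxU, hyU, hxy⟩ := hUo.exists_disjoint_balls_subset hUc.nonempty
  obtain ⟨g₁, hg₁, hA₁⟩ := exists_mem_preservingFixingSubgroup_mapsTo h1 hUo hUc.isPreconnected
    finite_empty hA (by simpa using subset_union_left.trans hsub) isOpen_ball (nonempty_ball.2 hr) hxU
  have hB₁ : g₁ '' B ⊆ U \ g₁ '' A := by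
    conv_rhs => rw [← hg₁.1]
    rw [← image_sdiff g₁.injective]
    exact image_mono (subset_sdiff.2 ⟨subset_union_right.trans hsub, hAB.symm⟩)
  obtain ⟨g₂, hg₂, hB₂⟩ := exists_mem_preservingFixingSubgroup_mapsTo h1 hUo hUc.isPreconnected
    (hA.image g₁) (hB.image g₁) hB₁ isOpen_ball (nonempty_ball.2 hs) hyU
  set g := g₂ * g₁
  have hgU : g '' U = U :=
    (mul_mem (preservingFixingSubgroup_anti (empty_subset _) hg₂) hg₁).1
  have hpre : ∀ O ⊆ U, g ⁻¹' O ⊆ U := fun O hOU w hw ↦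
    g.injective.mem_set_image.1 (hgU.symm ▸ hOU hw)
  refine ⟨g ⁻¹' ball x r, g ⁻¹' ball y s, isOpen_ball.preimage g.continuous,
    isOpen_ball.preimage g.continuous, g.isConnected_preimage.2 (isConnected_ball hr),
    g.isConnected_preimage.2 (isConnected_ball hs), hpre _ hxU, hpre _ hyU, fun a ha ↦ ?_,
    fun b hb ↦ hB₂ (mem_image_of_mem g₁ hb), by rw [← preimage_inter, hxy.inter_eq, preimage_empty]⟩
  change g₂ (g₁ a) ∈ ball x r
  rw [hg₂.2 (mem_image_of_mem g₁ ha)]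
  exact hA₁ ha
end

section
/- A compact subset A of ℝⁿ is disconnected if and only if there exist two finite unions U, V of open rational balls with A ⊆ U ∪ V, U ∩ V = ∅, A ∩ U ≠ ∅, and A ∩ V ≠ ∅. -/
/-- A point of `ℝⁿ` all of whose coordinates are rational. -/
def IsRatPt {n : ℕ} (x : EuclideanSpace ℝ (Fin n)) : Prop := ∀ i, ∃ q : ℚ, x i = (q : ℝ)

/-- `U` is a finite union of open rational balls (rational centers and rational radii). -/
def IsFinRatBallUnion {n : ℕ} (U : Set (EuclideanSpace ℝ (Fin n))) : Prop :=
  ∃ (m : ℕ) (c : Fin m → EuclideanSpace ℝ (Fin n)) (r : Fin m → ℚ),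
    (∀ i, IsRatPt (c i)) ∧ U = ⋃ i, Metric.ball (c i) ((r i : ℝ))

/-!
If `A` is not preconnected it splits into two disjoint nonempty relatively closed, hence compact,
pieces. These have disjoint `δ`-thickenings, and a finite cover of each piece by rational balls of
radius `r < δ / 2`, centred within `r` of its points, stays inside the corresponding thickening.
Conversely, finite unions of balls are open, so such `U` and `V` disconnect `A`.
-/

open Metric Set

section

variable {n : ℕ}

theorem IsFinRatBallUnion.isOpen {U : Set (EuclideanSpace ℝ (Fin n))} (hU : IsFinRatBallUnion U) :
    IsOpen U := by
  obtain ⟨m, c, r, -, rfl⟩ := hU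
  exact isOpen_iUnion fun i => isOpen_ball

theorem isFinRatBallUnion_biUnion {ι : Type*} (t : Finset ι) (c : ι → EuclideanSpace ℝ (Fin n))
    (r : ι → ℚ) (hc : ∀ i, IsRatPt (c i)) : IsFinRatBallUnion (⋃ i ∈ t, ball (c i) (r i : ℝ)) := by
  let e : t ≃ Fin t.card := t.equivFin
  refine ⟨t.card, fun k => c (e.symm k), fun k => r (e.symm k), fun k => hc _, ?_⟩
  rw [← Finset.set_biUnion_coe, biUnion_eq_iUnion]
  exact (e.symm.surjective.iUnion_comp fun i : t => ball (c i) (r i : ℝ)).symm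

theorem denseRange_ratPt :
    DenseRange fun q : Fin n → ℚ => (WithLp.toLp 2 fun i => (q i : ℝ) : EuclideanSpace ℝ (Fin n)) :=
  (WithLp.toLp_surjective 2).denseRange.comp (DenseRange.piMap fun _ => Rat.denseRange_cast)
    (PiLp.continuous_toLp 2 _)

theorem exists_isRatPt_dist_lt (x : EuclideanSpace ℝ (Fin n)) {ε : ℝ} (hε : 0 < ε) :
    ∃ c, IsRatPt c ∧ dist x c < ε := by
  obtain ⟨q, hq⟩ := Metric.denseRange_iff.mp denseRange_ratPt x ε hε
  exact ⟨_, fun i => ⟨q i, rfl⟩, hq⟩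

theorem IsCompact.exists_isFinRatBallUnion_subset_thickening {K : Set (EuclideanSpace ℝ (Fin n))}
    (hK : IsCompact K) {δ : ℝ} (hδ : 0 < δ) :
    ∃ U, IsFinRatBallUnion U ∧ K ⊆ U ∧ U ⊆ thickening δ K := by
  obtain ⟨r, hr0, hrδ⟩ := exists_rat_btwn (half_pos hδ)
  choose c hc hxc using fun x : K =>
    exists_isRatPt_dist_lt (x : EuclideanSpace ℝ (Fin n)) hr0
  obtain ⟨t, ht⟩ := hK.elim_finite_subcover (fun x => ball (c x) (r : ℝ)) (fun _ => isOpen_ball)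
    fun x hx => mem_iUnion.mpr ⟨⟨x, hx⟩, mem_ball.mpr (hxc ⟨x, hx⟩)⟩
  refine ⟨_, isFinRatBallUnion_biUnion t c (fun _ => r) hc, ht, ?_⟩
  simp only [iUnion_subset_iff]
  intro x _ y hy
  refine mem_thickening_iff.mpr ⟨x, x.2, ?_⟩
  calc dist y x ≤ dist y (c x) + dist (x : EuclideanSpace ℝ (Fin n)) (c x) :=
        dist_triangle_right _ _ _
    _ < r + r := add_lt_add (mem_ball.mp hy) (hxc x)
    _ < δ := by linarith

theorem exists_isFinRatBallUnion_separating {K L : Set (EuclideanSpace ℝ (Fin n))}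
    (hK : IsCompact K) (hL : IsCompact L) (hKL : Disjoint K L) :
    ∃ U V, IsFinRatBallUnion U ∧ IsFinRatBallUnion V ∧ K ⊆ U ∧ L ⊆ V ∧ Disjoint U V := by
  obtain ⟨δ, hδ, hthick⟩ := hKL.exists_thickenings hK hL.isClosed
  obtain ⟨U, hU, hKU, hUδ⟩ := hK.exists_isFinRatBallUnion_subset_thickening hδ
  obtain ⟨V, hV, hLV, hVδ⟩ := hL.exists_isFinRatBallUnion_subset_thickening hδ
  exact ⟨U, V, hU, hV, hKU, hLV, hthick.mono hUδ hVδ⟩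

end

theorem stmt6 (n : ℕ) (A : Set (EuclideanSpace ℝ (Fin n))) (hA : IsCompact A) :
    ¬ IsPreconnected A ↔
      ∃ U V : Set (EuclideanSpace ℝ (Fin n)), IsFinRatBallUnion U ∧ IsFinRatBallUnion V ∧
        A ⊆ U ∪ V ∧ U ∩ V = ∅ ∧ (A ∩ U).Nonempty ∧ (A ∩ V).Nonempty := by
  constructor
  · rw [isPreconnected_closed_iff]
    push Not
    rintro ⟨s, t, hs, ht, hAst, hAs, hAt, hAst_inter⟩
    have hdisj : Disjoint (A ∩ s) (A ∩ t) := by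
      rwa [disjoint_iff_inter_eq_empty, ← inter_inter_distrib_left]
    obtain ⟨U, V, hU, hV, hsU, htV, hUV⟩ :=
      exists_isFinRatBallUnion_separating (hA.inter_right hs) (hA.inter_right ht) hdisj
    refine ⟨U, V, hU, hV, ?_, hUV.inter_eq, ?_, ?_⟩
    · intro x hx
      exact (hAst hx).imp (fun hxs => hsU ⟨hx, hxs⟩) fun hxt => htV ⟨hx, hxt⟩
    · exact hAs.mono fun x hx => ⟨hx.1, hsU hx⟩
    · exact hAt.mono fun x hx => ⟨hx.1, htV hx⟩
  · rintro ⟨U, V, hU, hV, hAUV, hUV, hAU, hAV⟩ hA_conn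
    obtain ⟨x, -, hx⟩ := hA_conn U V hU.isOpen hV.isOpen hAUV hAU hAV
    exact hUV.subset hx
end

section
/- Let U, V be disjoint nonempty open subsets of ℝ such that U is the interior of ℝ \ V and V is the interior of ℝ \ U. Then between any two distinct connected components U₁ < U₂ of U (meaning every point of U₁ is less than every point of U₂), there is a connected component of V: i.e., there exists a point of V lying strictly between sup U₁ and inf U₂ (in particular some component of V meets the interval (inf U₁, sup U₂)). -/
theorem stmt8 (U V : Set ℝ) (hUo : IsOpen U) (hVo : IsOpen V)
    (hUne : U.Nonempty) (hVne : V.Nonempty) (hdisj : U ∩ V = ∅)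
    (hUi : U = interior Vᶜ) (hVi : V = interior Uᶜ)
    (U₁ U₂ : Set ℝ)
    (x₁ : ℝ) (hx₁ : x₁ ∈ U) (h₁ : U₁ = connectedComponentIn U x₁)
    (x₂ : ℝ) (hx₂ : x₂ ∈ U) (h₂ : U₂ = connectedComponentIn U x₂)
    (hlt : ∀ x ∈ U₁, ∀ y ∈ U₂, x < y) :
    ∃ v ∈ V, sSup U₁ < v ∧ v < sInf U₂ := by
  subst h₁ h₂
  set U₁ := connectedComponentIn U x₁ with hU₁
  set U₂ := connectedComponentIn U x₂ with hU₂
  have hx₁U₁ : x₁ ∈ U₁ := mem_connectedComponentIn hx₁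
  have hx₂U₂ : x₂ ∈ U₂ := mem_connectedComponentIn hx₂
  have hU₁U : U₁ ⊆ U := connectedComponentIn_subset U x₁
  have hU₂U : U₂ ⊆ U := connectedComponentIn_subset U x₂
  have hx12 : x₁ < x₂ := hlt x₁ hx₁U₁ x₂ hx₂U₂
  have hbdd : BddAbove U₁ := ⟨x₂, fun u hu => (hlt u hu x₂ hx₂U₂).le⟩
  have hbdd' : BddBelow U₂ := ⟨x₁, fun u hu => (hlt x₁ hx₁U₁ u hu).le⟩
  set a := sSup U₁ with ha
  set b := sInf U₂ with hb
  have hx₁a : x₁ ≤ a := le_csSup hbdd hx₁U₁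
  have hbx₂ : b ≤ x₂ := csInf_le hbdd' hx₂U₂
  have hab : a ≤ b := csSup_le ⟨x₁, hx₁U₁⟩ fun u hu =>
    le_csInf ⟨x₂, hx₂U₂⟩ fun w hw => (hlt u hu w hw).le
  have hUV : U ⊆ Vᶜ := fun t ht hv =>
    (Set.eq_empty_iff_forall_notMem.mp hdisj t) ⟨ht, hv⟩
  have hclV : closure U ⊆ Vᶜ := closure_minimal hUV hVo.isClosed_compl
  have haV : a ∉ V := fun hv =>
    hclV (closure_mono hU₁U (csSup_mem_closure ⟨x₁, hx₁U₁⟩ hbdd)) hv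
  have hbV : b ∉ V := fun hv =>
    hclV (closure_mono hU₂U (csInf_mem_closure ⟨x₂, hx₂U₂⟩ hbdd')) hv
  by_contra h
  push_neg at h
  have hIccV : Set.Icc x₁ x₂ ⊆ Vᶜ := by
    intro t ht hv
    rcases lt_or_ge t a with h1 | h1
    · obtain ⟨u, huU₁, htu⟩ := exists_lt_of_lt_csSup ⟨x₁, hx₁U₁⟩ h1
      have : t ∈ U₁ :=
        (isPreconnected_connectedComponentIn.ordConnected).out hx₁U₁ huU₁ ⟨ht.1, htu.le⟩
      exact hUV (hU₁U this) hv
    rcases lt_or_ge b t with h2 | h2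
    · obtain ⟨u, huU₂, htu⟩ := exists_lt_of_csInf_lt ⟨x₂, hx₂U₂⟩ h2
      have : t ∈ U₂ :=
        (isPreconnected_connectedComponentIn.ordConnected).out huU₂ hx₂U₂ ⟨htu.le, ht.2⟩
      exact hUV (hU₂U this) hv
    · rcases eq_or_lt_of_le h1 with rfl | h1'
      · exact haV hv
      · have := h t hv h1'
        have : t = b := le_antisymm h2 this
        exact hbV (this ▸ hv)
  have hIoo : Set.Ioo x₁ x₂ ⊆ U := by
    rw [hUi, ← interior_Icc]
    exact interior_mono hIccV
  have hIcc : Set.Icc x₁ x₂ ⊆ U := by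
    intro t ⟨h1, h2⟩
    rcases eq_or_lt_of_le h1 with rfl | h1'
    · exact hx₁
    rcases eq_or_lt_of_le h2 with rfl | h2'
    · exact hx₂
    exact hIoo ⟨h1', h2'⟩
  have hsub : Set.Icc x₁ x₂ ⊆ U₁ :=
    isPreconnected_Icc.subset_connectedComponentIn ⟨le_refl x₁, hx12.le⟩ hIcc
  exact absurd (hlt x₂ (hsub ⟨hx12.le, le_refl x₂⟩) x₂ hx₂U₂) (lt_irrefl x₂)
end

section
/- A subset A of the space k^ω_⊥ of partial functions ω ⇀ {0,…,k−1} is of the form A_f = {g : g ⊆ f} for some total function f : ω → k if and only if A is maximal (with respect to inclusion) among closed subsets C of k^ω_⊥ satisfying: for all open U, V, if U ∩ C ≠ ∅ and V ∩ C ≠ ∅ then U ∩ V ∩ C ≠ ∅. -/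
/-- Partial functions from `ω` to `{0,…,k−1}`, modeled as `ℕ → Option (Fin k)`. -/
abbrev PartFn (k : ℕ) := ℕ → Option (Fin k)

/-- The subfunction relation: `g ⊆ f` iff `g x = f x` whenever `g x` is defined. -/
def Subfn {k : ℕ} (g f : PartFn k) : Prop := ∀ x v, g x = some v → f x = some v

/-- `f` has finite graph. -/
def FinGraph {k : ℕ} (f : PartFn k) : Prop := {x | f x ≠ none}.Finite

/-- The Scott topology on `k^ω_⊥`, generated by the sets `{g : f₀ ⊆ g}` for `f₀`
with finite graph. -/
instance partFnTop (k : ℕ) : TopologicalSpace (PartFn k) :=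
  TopologicalSpace.generateFrom
    {U | ∃ f₀ : PartFn k, FinGraph f₀ ∧ U = {g | Subfn f₀ g}}

/-- The set `A_f` of all partial subfunctions of the total function `f`. -/
def Af {k : ℕ} (f : ℕ → Fin k) : Set (PartFn k) := {g | ∀ x v, g x = some v → v = f x}

/-- `C` is irreducible: any two open sets meeting `C` intersect inside `C`. -/
def Irr {k : ℕ} (C : Set (PartFn k)) : Prop :=
  ∀ U V : Set (PartFn k), IsOpen U → IsOpen V →
    (U ∩ C).Nonempty → (V ∩ C).Nonempty → (U ∩ V ∩ C).Nonempty

/-!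
`A_f` is closed, its complement being the union of the basic open sets `{g | g x = some v}` with
`v ≠ f x`, and irreducible, because the total function `f` lies in every open set meeting `A_f`.
Conversely, irreducibility of `C` applied to the open sets `{g | g x = some v}` shows that any two
members of `C` agree wherever both are defined, so `C ⊆ A_f` for some total `f` (defined
arbitrarily off the common domain, which needs `k > 0`). Hence a closed irreducible set containing
`A_f` lies in some `A_{f'}`, and the one-point subfunctions of `f` force `f' = f`.
-/

variable {k : ℕ}

def PartFn.single (x : ℕ) (v : Fin k) : PartFn k := Function.update (fun _ => none) x (some v)

lemma PartFn.single_apply_eq_some {x y : ℕ} {v w : Fin k} (h : PartFn.single x v y = some w) :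
    y = x ∧ w = v := by
  by_cases hyx : y = x
  · subst hyx
    simp only [PartFn.single, Function.update_self, Option.some.injEq] at h
    exact ⟨rfl, h.symm⟩
  · simp [PartFn.single, Function.update_of_ne hyx] at h

lemma PartFn.single_mem_Af (f : ℕ → Fin k) (x : ℕ) : PartFn.single x (f x) ∈ Af f := by
  intro y w h
  obtain ⟨rfl, rfl⟩ := PartFn.single_apply_eq_some h
  rfl

lemma isOpen_setOf_apply_eq_some (x : ℕ) (v : Fin k) :
    IsOpen {g : PartFn k | g x = some v} := by
  apply TopologicalSpace.GenerateOpen.basic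
  refine ⟨PartFn.single x v, ?_, ?_⟩
  · refine (Set.finite_singleton x).subset fun y hy => ?_
    by_contra hyx
    exact hy (Function.update_of_ne hyx _ _)
  · ext g
    refine ⟨fun h y w hw => ?_, fun h => h x v (Function.update_self _ _ _)⟩
    obtain ⟨rfl, rfl⟩ := PartFn.single_apply_eq_some hw
    exact h

lemma IsOpen.mem_of_subfn {U : Set (PartFn k)} (hU : IsOpen U) {g h : PartFn k}
    (hgh : Subfn g h) (hg : g ∈ U) : h ∈ U := by
  induction hU generalizing g h with
  | basic U hU =>
    obtain ⟨f₀, -, rfl⟩ := hU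
    exact fun x v hx => hgh x v (hg x v hx)
  | univ => trivial
  | inter U V _ _ ihU ihV => exact ⟨ihU hgh hg.1, ihV hgh hg.2⟩
  | sUnion S _ ih =>
    obtain ⟨U, hU, hgU⟩ := hg
    exact ⟨U, hU, ih U hU hgh hgU⟩

lemma isClosed_Af (f : ℕ → Fin k) : IsClosed (Af f) := by
  have hcompl : (Af f)ᶜ = ⋃ x, ⋃ v ∈ {v : Fin k | v ≠ f x}, {g : PartFn k | g x = some v} := by
    ext g
    simp [Af, and_comm]
  rw [← isOpen_compl_iff, hcompl]
  exact isOpen_iUnion fun x => isOpen_biUnion fun v _ => isOpen_setOf_apply_eq_some x v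

lemma irr_Af (f : ℕ → Fin k) : Irr (Af f) := by
  rintro U V hU hV ⟨u, huU, huA⟩ ⟨w, hwV, hwA⟩
  have subfn_total : ∀ g ∈ Af f, Subfn g (fun x => some (f x)) := fun g hg x v hx => by
    rw [hg x v hx]
  refine ⟨fun x => some (f x), ⟨hU.mem_of_subfn (subfn_total u huA) huU,
    hV.mem_of_subfn (subfn_total w hwA) hwV⟩, fun x v hx => ?_⟩
  cases hx
  rfl

lemma Irr.eq_of_apply_eq_some {C : Set (PartFn k)} (hC : Irr C) {g h : PartFn k}
    (hg : g ∈ C) (hh : h ∈ C) {x : ℕ} {v w : Fin k} (hgx : g x = some v) (hhx : h x = some w) :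
    v = w := by
  obtain ⟨u, ⟨hux : u x = some v, hux' : u x = some w⟩, -⟩ :=
    hC _ _ (isOpen_setOf_apply_eq_some x v) (isOpen_setOf_apply_eq_some x w) ⟨g, hgx, hg⟩
      ⟨h, hhx, hh⟩
  exact Option.some_injective _ (hux.symm.trans hux')

lemma Irr.exists_subset_Af (hk : 0 < k) {C : Set (PartFn k)} (hC : Irr C) :
    ∃ f : ℕ → Fin k, C ⊆ Af f := by
  classical
  let f : ℕ → Fin k := fun x =>
    if h : ∃ v : Fin k, ∃ g ∈ C, g x = some v then h.choose else ⟨0, hk⟩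
  refine ⟨f, fun g hg x v hgx => ?_⟩
  have hdef : ∃ v : Fin k, ∃ g ∈ C, g x = some v := ⟨v, g, hg, hgx⟩
  obtain ⟨g₀, hg₀, hg₀x⟩ := hdef.choose_spec
  simpa only [f, dif_pos hdef] using hC.eq_of_apply_eq_some hg hg₀ hgx hg₀x

lemma eq_of_Af_subset_Af {f f' : ℕ → Fin k} (h : Af f ⊆ Af f') : f = f' :=
  funext fun x => h (PartFn.single_mem_Af f x) x (f x) (Function.update_self _ _ _)

theorem stmt14 (k : ℕ) (hk : 2 ≤ k) (A : Set (PartFn k)) :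
    (∃ f : ℕ → Fin k, A = Af f) ↔
      (IsClosed A ∧ Irr A ∧
        ∀ C : Set (PartFn k), IsClosed C → Irr C → A ⊆ C → A = C) := by
  have hk₀ : 0 < k := by omega
  constructor
  · rintro ⟨f, rfl⟩
    refine ⟨isClosed_Af f, irr_Af f, fun C _ hC hAC => ?_⟩
    obtain ⟨f', hCf'⟩ := hC.exists_subset_Af hk₀
    obtain rfl := eq_of_Af_subset_Af (hAC.trans hCf')
    exact hAC.antisymm hCf'
  · rintro ⟨-, hA, hmax⟩
    obtain ⟨f, hAf⟩ := hA.exists_subset_Af hk₀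
    exact ⟨f, hmax (Af f) (isClosed_Af f) (irr_Af f) hAf⟩
end
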